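/- arXiv:2509.12943 — 2 statements merged into one kernel-verified Lean document; each statement's English description precedes it below -/
import Mathlib

section
/- Let a, b, c be real numbers satisfying b² − a·b − c = 1 and (a − b)² < 4, and let M be the 3×3 real matrix with rows (0, 1, 0), (0, 0, 1), (b, c, a). Then, viewing M as a complex matrix, there exists an eigenvalue λ ∈ ℂ of M (a root of its characteristic polynomial over ℂ) with λ.im ≠ 0 and |λ| = 1; moreover conj λ is also an eigenvalue of M. -/
open Polynomial

/-!
On the Neimark–Sacker set the characteristic polynomial `X³ − aX² − cX − b` of the companion
matrix factors as `(X − b)(X² − (a − b)X + 1)`. Every `z` on the unit circle is a root of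
`X² − 2 Re z · X + 1 = (X − z)(X − z̄)`, and since `|a − b| < 2` there is a non-real such `z`
with `2 Re z = a − b`; it and its conjugate are the required eigenvalues.
-/

theorem Matrix.charpoly_fin_three_companion {R : Type*} [CommRing R] (p q r : R) :
    (!![0, 1, 0; 0, 0, 1; p, q, r] : Matrix (Fin 3) (Fin 3) R).charpoly
      = X ^ 3 - C r * X ^ 2 - C q * X - C p := by
  rw [Matrix.charpoly, Matrix.det_fin_three]
  simp
  ring

theorem cubic_factor_of_sq_sub_mul_sub_eq_one {R : Type*} [CommRing R] {a b c : R}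
    (h : b ^ 2 - a * b - c = 1) :
    (X ^ 3 - C a * X ^ 2 - C c * X - C b : R[X])
      = (X - C b) * (X ^ 2 - C (a - b) * X + 1) := by
  obtain rfl : c = b ^ 2 - a * b - 1 := by linear_combination -h
  simp only [map_sub, map_mul, map_pow, map_one]
  ring

theorem Complex.isRoot_X_sq_sub_two_re_mul_X_add_one {z : ℂ} (hz : ‖z‖ = 1) :
    (X ^ 2 - C (2 * z.re : ℂ) * X + 1).IsRoot z := by
  have hconj : z * (starRingEnd ℂ) z = 1 := by
    rw [Complex.mul_conj', hz]
    simp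
  have hre : (2 * z.re : ℂ) = z + (starRingEnd ℂ) z := by
    rw [Complex.add_conj]
    push_cast
    ring
  simp only [IsRoot, eval_add, eval_sub, eval_mul, eval_pow, eval_C, eval_X, eval_one, hre]
  linear_combination -hconj

theorem Complex.exists_norm_eq_one_re_eq {t : ℝ} (ht : t ^ 2 < 1) :
    ∃ z : ℂ, z.re = t ∧ z.im ≠ 0 ∧ ‖z‖ = 1 := by
  have hs : Real.sqrt (1 - t ^ 2) ^ 2 = 1 - t ^ 2 := Real.sq_sqrt (by linarith)
  refine ⟨⟨t, Real.sqrt (1 - t ^ 2)⟩, rfl, (Real.sqrt_pos.mpr (by linarith)).ne', ?_⟩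
  rw [Complex.norm_def, Complex.normSq_mk, ← sq, ← sq, hs, add_sub_cancel, Real.sqrt_one]

/-- On the Neimark–Sacker set `b² − ab − c = 1` with `(a − b)² < 4`, the Mira
Jacobian `!![0,1,0; 0,0,1; b,c,a]`, viewed as a complex matrix, has an eigenvalue
`λ` (root of its characteristic polynomial over `ℂ`) with `λ.im ≠ 0` and `|λ| = 1`,
and `conj λ` is also an eigenvalue. -/
theorem mira_jacobian_neimark_sacker_eigenvalues (a b c : ℝ)
    (h : b ^ 2 - a * b - c = 1) (h' : (a - b) ^ 2 < 4)
    (M : Matrix (Fin 3) (Fin 3) ℝ) (hM : M = !![0, 1, 0; 0, 0, 1; b, c, a]) :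
    ∃ l : ℂ, l.im ≠ 0 ∧ ‖l‖ = 1 ∧
      ((M.map (Complex.ofReal)).charpoly).IsRoot l ∧
      ((M.map (Complex.ofReal)).charpoly).IsRoot ((starRingEnd ℂ) l) := by
  have hMC : M.map Complex.ofReal = !![0, 1, 0; 0, 0, 1; (b : ℂ), c, a] := by
    subst hM
    ext i j
    fin_cases i <;> fin_cases j <;> simp
  have hfactor : (M.map Complex.ofReal).charpoly
      = (X - C (b : ℂ)) * (X ^ 2 - C ((a : ℂ) - b) * X + 1) := by
    rw [hMC, Matrix.charpoly_fin_three_companion]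
    exact cubic_factor_of_sq_sub_mul_sub_eq_one (by exact_mod_cast h)
  have hroot : ∀ w : ℂ, ‖w‖ = 1 → w.re = (a - b) / 2 →
      ((M.map Complex.ofReal).charpoly).IsRoot w := by
    intro w hw hre
    rw [hfactor, show (a : ℂ) - b = 2 * w.re by rw [hre]; push_cast; ring]
    exact root_mul_left_of_isRoot _ (Complex.isRoot_X_sq_sub_two_re_mul_X_add_one hw)
  obtain ⟨z, hre, him, hnorm⟩ :=
    Complex.exists_norm_eq_one_re_eq (t := (a - b) / 2) (by nlinarith)
  exact ⟨z, him, hnorm, hroot z hnorm hre,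
    hroot _ (by rwa [Complex.norm_conj]) (by rwa [Complex.conj_re])⟩
end

section
/- Let f : X → X be a map, let A, B ⊆ X be disjoint sets with f(A) ⊆ B and f(B) ⊆ A, and let x₀ ∈ A be a periodic point of f whose minimal period equals 2·p for some natural number p ≥ 1. Suppose there is a function π : X → Y (the angular position along the original invariant curve) such that π(f^[n + p](x₀)) = π(f^[n](x₀)) for every natural number n, and such that any two points u, v of the forward orbit {f^[n](x₀) | n ∈ ℕ} satisfying π(u) = π(v) and (u ∈ A ↔ v ∈ A) are equal. Then p is odd. -/
/-! If `p` were even, `f^[p] x₀` would lie in `A`, like `x₀`, and have the same angular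
position, so separation forces `f^[p] x₀ = x₀`, contradicting the minimal period `2 * p`. -/

open Function Set

theorem Set.MapsTo.iterate_of_even {X : Type*} {f : X → X} {A B : Set X}
    (hAB : MapsTo f A B) (hBA : MapsTo f B A) {n : ℕ} (hn : Even n) : MapsTo f^[n] A A := by
  obtain ⟨k, rfl⟩ := hn
  rw [← two_mul, iterate_mul]
  exact (hBA.comp hAB).iterate k

theorem odd_period_of_loop_doubling_general {X Y : Type*} (f : X → X) (A B : Set X)
    (hAB : f '' A ⊆ B) (hBA : f '' B ⊆ A)
    (x₀ : X) (hx₀ : x₀ ∈ A) (p : ℕ) (hp : 1 ≤ p)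
    (hper : Function.minimalPeriod f x₀ = 2 * p)
    (π : X → Y)
    (hπper : ∀ n : ℕ, π (f^[n + p] x₀) = π (f^[n] x₀))
    (hsep : ∀ u v : X, (∃ n : ℕ, f^[n] x₀ = u) → (∃ n : ℕ, f^[n] x₀ = v) →
      π u = π v → (u ∈ A ↔ v ∈ A) → u = v) :
    Odd p := by
  by_contra hodd
  have hmem : f^[p] x₀ ∈ A :=
    (mapsTo_iff_image_subset.2 hAB).iterate_of_even (mapsTo_iff_image_subset.2 hBA)
      (Nat.not_odd_iff_even.1 hodd) hx₀
  have hfix : IsPeriodicPt f p x₀ :=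
    hsep _ _ ⟨p, rfl⟩ ⟨0, rfl⟩ (by simpa using hπper 0) (iff_of_true hmem hx₀)
  have := hfix.minimalPeriod_le hp
  omega

/-- If two disjoint sets `A`, `B` are swapped by `f`, a point `x₀ ∈ A` has minimal
period `2p`, and there is an angular-position function `π` that is `p`-periodic
along the orbit of `x₀` and, together with membership in `A`, separates orbit
points, then `p` is odd.  (A resonant invariant curve whose cycle has even period
cannot undergo loop doubling.) -/
theorem odd_period_of_loop_doubling {X Y : Type*} (f : X → X) (A B : Set X)
    (hdisj : Disjoint A B) (hAB : f '' A ⊆ B) (hBA : f '' B ⊆ A)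
    (x₀ : X) (hx₀ : x₀ ∈ A) (p : ℕ) (hp : 1 ≤ p)
    (hper : Function.minimalPeriod f x₀ = 2 * p)
    (π : X → Y)
    (hπper : ∀ n : ℕ, π (f^[n + p] x₀) = π (f^[n] x₀))
    (hsep : ∀ u v : X, (∃ n : ℕ, f^[n] x₀ = u) → (∃ n : ℕ, f^[n] x₀ = v) →
      π u = π v → (u ∈ A ↔ v ∈ A) → u = v) :
    Odd p :=
  odd_period_of_loop_doubling_general f A B hAB hBA x₀ hx₀ p hp hper π hπper hsep
end
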